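/- arXiv:2508.21698 — 4 statements merged into one kernel-verified Lean document; each statement's English description precedes it below -/
import Mathlib

section
/- Let G = (V,E) be the undirected graph whose vertices are positions and with an edge (k,k') whenever some query-document pair is observed at both positions k and k'. If G is connected, then for any two parameterizations (θ, γ) and (θ', γ') of the additive two-tower model that induce identical click probabilities on all observed data, there exists a single constant Δ ∈ ℝ such that θ'_k = θ_k + Δ for all positions k and γ'_{q,d} = γ_{q,d} − Δ for all observed pairs (q,d). In particular, after the normalization θ_1 = θ'_1 = 0, the two parameterizations coincide on all observed positions and pairs. -/
noncomputable def sigmoid (x : ℝ) : ℝ := 1 / (1 + Real.exp (-x))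

/-- Positions `k` and `k'` are adjacent in the position-sharing graph of the
observation set `S` if some query-document pair is observed at both. -/
def sharesPair {Q D K : Type*} (S : Set (Q × D × K)) (k k' : K) : Prop :=
  ∃ q d, (q, d, k) ∈ S ∧ (q, d, k') ∈ S

lemma sigmoid_injective : Function.Injective sigmoid := by
  intro x y h
  unfold sigmoid at h
  field_simp at h
  have h' : Real.exp (-y) = Real.exp (-x) := by linarith
  have := Real.exp_injective h'
  linarith

/-- If the position-sharing graph is connected, any two observationally
equivalent parameterizations differ by a single global constant `Δ`; after the
normalization `θ k₁ = θ' k₁ = 0` they coincide on all positions and observed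
pairs. -/
theorem stmt_2 {Q D K : Type*} (S : Set (Q × D × K))
    (θ θ' : K → ℝ) (γ γ' : Q × D → ℝ) (k₁ : K)
    (hconn : ∀ k k' : K, Relation.ReflTransGen (sharesPair S) k k')
    (hobs : ∀ q d, ∃ k, (q, d, k) ∈ S)
    (heq : ∀ q d k, (q, d, k) ∈ S →
      sigmoid (θ k + γ (q, d)) = sigmoid (θ' k + γ' (q, d))) :
    (∃ Δ : ℝ, (∀ k, θ' k = θ k + Δ) ∧ (∀ q d, γ' (q, d) = γ (q, d) - Δ)) ∧
      (θ k₁ = 0 → θ' k₁ = 0 →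
        (∀ k, θ' k = θ k) ∧ (∀ q d, γ' (q, d) = γ (q, d))) := by
  have hlin : ∀ q d k, (q, d, k) ∈ S →
      θ k + γ (q, d) = θ' k + γ' (q, d) := fun q d k hk =>
    sigmoid_injective (heq q d k hk)
  have hadj : ∀ k k', sharesPair S k k' → θ' k - θ k = θ' k' - θ k' := by
    rintro k k' ⟨q, d, h1, h2⟩
    have e1 := hlin q d k h1
    have e2 := hlin q d k' h2
    linarith
  have hdiff : ∀ k, θ' k - θ k = θ' k₁ - θ k₁ := by
    intro k
    have h := hconn k₁ k
    induction h with
    | refl => rfl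
    | tail _ hstep ih => rw [← hadj _ _ hstep, ih]
  set Δ := θ' k₁ - θ k₁ with hΔ
  have hθ : ∀ k, θ' k = θ k + Δ := fun k => by have := hdiff k; linarith
  have hγ : ∀ q d, γ' (q, d) = γ (q, d) - Δ := by
    intro q d
    obtain ⟨k, hk⟩ := hobs q d
    have := hlin q d k hk
    have := hθ k
    linarith
  refine ⟨⟨Δ, hθ, hγ⟩, fun h1 h2 => ⟨fun k => ?_, fun q d => ?_⟩⟩
  · have : Δ = 0 := by rw [hΔ, h1, h2]; ring
    rw [hθ k, this, add_zero]
  · have : Δ = 0 := by rw [hΔ, h1, h2]; ring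
    rw [hγ q d, this, sub_zero]
end

section
/- Under a deterministic logging policy, inverse propensity weighting cannot recover unobserved positions: if π(d,k|q) ∈ {0,1} for all (d,k) (each document shown at exactly one position per query), then the IPS-weighted loss equals the unweighted loss restricted to the observed triples, and hence the IPS-corrected model has the same set of minimizers as the uncorrected model; in particular, the model remains unidentifiable (parameters can be shifted by independent per-rank offsets Δ_k without changing the loss). -/
open Finset
open scoped Classical

/-- Pointwise Bernoulli cross-entropy term of the two-tower model. -/
noncomputable def bce (p z : ℝ) : ℝ :=
  p * Real.log (sigmoid z) + (1 - p) * Real.log (1 - sigmoid z)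

/-- Expected negative log-likelihood. -/
noncomputable def lossPlain {Q D K : Type*} [Fintype Q] [Fintype D] [Fintype K]
    (P : Q → ℝ) (π : Q → D → K → ℝ) (p : Q → D → K → ℝ)
    (θ : K → ℝ) (γ : Q × D → ℝ) : ℝ :=
  -∑ q : Q, P q * ∑ d : D, ∑ k : K,
    π q d k * bce (p q d k) (θ k + γ (q, d))

/-- Expected IPS-weighted negative log-likelihood, restricted to displayed
triples (`π > 0`). -/
noncomputable def lossIPS {Q D K : Type*} [Fintype Q] [Fintype D] [Fintype K]
    (P : Q → ℝ) (π : Q → D → K → ℝ) (p : Q → D → K → ℝ)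
    (θ : K → ℝ) (γ : Q × D → ℝ) : ℝ :=
  -∑ q : Q, P q * ∑ d : D, ∑ k : K,
    if 0 < π q d k then
      (1 / π q d k) * π q d k * bce (p q d k) (θ k + γ (q, d))
    else 0

section LoggingPolicy

variable {Q D K : Type*} [Fintype Q] [Fintype D] [Fintype K]
  (P : Q → ℝ) (π : Q → D → K → ℝ) (p : Q → D → K → ℝ)

theorem lossIPS_eq_lossPlain_of_zero_or_one (hπ : ∀ q d k, π q d k = 0 ∨ π q d k = 1)
    (θ : K → ℝ) (γ : Q × D → ℝ) :
    lossIPS P π p θ γ = lossPlain P π p θ γ := by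
  unfold lossIPS lossPlain
  congr 1
  refine sum_congr rfl fun q _ => congrArg _ <| sum_congr rfl fun d _ => sum_congr rfl fun k _ => ?_
  rcases hπ q d k with h | h <;> simp [h]

theorem lossIPS_congr_of_logit_eq_of_pos {θ θ' : K → ℝ} {γ γ' : Q × D → ℝ}
    (hlogit : ∀ q d k, 0 < π q d k → θ k + γ (q, d) = θ' k + γ' (q, d)) :
    lossIPS P π p θ γ = lossIPS P π p θ' γ' := by
  unfold lossIPS
  congr 1
  refine sum_congr rfl fun q _ => congrArg _ <| sum_congr rfl fun d _ => sum_congr rfl fun k _ => ?_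
  split_ifs with h
  · rw [hlogit q d k h]
  · rfl

end LoggingPolicy

/-- Under a deterministic logging policy (each document shown at exactly one
position per query, `π ∈ {0,1}`), the IPS-weighted loss coincides with the
unweighted loss, and the model remains unidentifiable: independent per-rank
shifts `Δ_k` leave the IPS loss unchanged. -/
theorem stmt_15 {Q D K : Type*} [Fintype Q] [Fintype D] [Fintype K]
    (P : Q → ℝ) (π : Q → D → K → ℝ) (p : Q → D → K → ℝ)
    (kof : Q → D → K)
    (hdet : ∀ q d k, π q d k = if k = kof q d then 1 else 0) :
    (∀ (θ : K → ℝ) (γ : Q × D → ℝ),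
        lossIPS P π p θ γ = lossPlain P π p θ γ) ∧
    (∀ (Δ : K → ℝ) (θ : K → ℝ) (γ : Q × D → ℝ),
        lossIPS P π p (fun k => θ k + Δ k)
            (fun qd => γ qd - Δ (kof qd.1 qd.2)) =
          lossIPS P π p θ γ) := by
  refine ⟨lossIPS_eq_lossPlain_of_zero_or_one P π p fun q d k => ?_, fun Δ θ γ => ?_⟩
  · rw [hdet]
    split_ifs <;> simp
  · refine lossIPS_congr_of_logit_eq_of_pos P π p fun q d k hpos => ?_
    have hk : k = kof q d := by
      by_contra hne
      simp [hdet, hne] at hpos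
    subst hk
    ring
end

section
/- Strict convexity of the population two-tower loss in the sum z = θ_k + γ_{q,d}: the expected negative log-likelihood L(θ,γ), viewed as a function of the vector of sums (θ_k + γ_{q,d}) over observed triples with positive weights P(q)π(d,k|q) > 0, is strictly convex; consequently all stationary points of L yield identical click probabilities σ(θ_k + γ_{q,d}) on the observed triples. -/
open Finset
open scoped Classical

/-- Expected negative log-likelihood of an additive two-tower model. -/
noncomputable def twoTowerLoss {Q D K : Type*} [Fintype Q] [Fintype D] [Fintype K]
    (P : Q → ℝ) (π : Q → D → K → ℝ) (p : Q → D → K → ℝ)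
    (θ : K → ℝ) (γ : Q × D → ℝ) : ℝ :=
  -∑ q : Q, P q * ∑ d : D, ∑ k : K, π q d k *
    (p q d k * Real.log (sigmoid (θ k + γ (q, d))) +
      (1 - p q d k) * Real.log (1 - sigmoid (θ k + γ (q, d))))

lemma denom_pos (x : ℝ) : 0 < 1 + Real.exp (-x) := by positivity
lemma sigmoid_pos (x : ℝ) : 0 < sigmoid x := by
  unfold sigmoid; positivity
lemma sigmoid_lt_one (x : ℝ) : sigmoid x < 1 := by
  unfold sigmoid
  rw [div_lt_one (denom_pos x)]
  linarith [Real.exp_pos (-x)]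

lemma hasDerivAt_sigmoid (x : ℝ) :
    HasDerivAt sigmoid (sigmoid x * (1 - sigmoid x)) x := by
  have h1 : HasDerivAt (fun y : ℝ => 1 + Real.exp (-y)) (-Real.exp (-x)) x := by
    have := (Real.hasDerivAt_exp (-x)).comp x (hasDerivAt_neg x)
    simpa using this.const_add 1
  have h2 := h1.inv (ne_of_gt (denom_pos x))
  have hfn : sigmoid = fun y : ℝ => (1 + Real.exp (-y))⁻¹ := by
    funext y; simp [sigmoid, one_div]
  have : HasDerivAt sigmoid (-(-Real.exp (-x)) / (1 + Real.exp (-x)) ^ 2) x := by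
    rw [hfn]; exact h2
  convert this using 1
  unfold sigmoid
  have hd := (denom_pos x).ne'
  field_simp
  ring

noncomputable def loglik (p t : ℝ) : ℝ :=
  p * Real.log (sigmoid t) + (1 - p) * Real.log (1 - sigmoid t)

lemma hasDerivAt_loglik (p t : ℝ) :
    HasDerivAt (loglik p) (p - sigmoid t) t := by
  have hσ := hasDerivAt_sigmoid t
  have h1 : HasDerivAt (fun t => Real.log (sigmoid t)) (1 - sigmoid t) t := by
    have := (Real.hasDerivAt_log (sigmoid_pos t).ne').comp t hσ
    refine this.congr_deriv ?_
    field_simp [(sigmoid_pos t).ne']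
  have h2 : HasDerivAt (fun t => Real.log (1 - sigmoid t)) (-sigmoid t) t := by
    have hs : HasDerivAt (fun t => 1 - sigmoid t) (-(sigmoid t * (1 - sigmoid t))) t := by
      simpa using hσ.const_sub 1
    have hne : 1 - sigmoid t ≠ 0 := by linarith [sigmoid_lt_one t]
    have := (Real.hasDerivAt_log hne).comp t hs
    refine this.congr_deriv ?_
    field_simp
  have := (h1.const_mul p).add (h2.const_mul (1 - p))
  refine this.congr_deriv ?_
  ring

lemma sigmoid_strictMono : StrictMono sigmoid := by
  apply strictMono_of_deriv_pos
  intro x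
  rw [(hasDerivAt_sigmoid x).deriv]
  have := sigmoid_pos x
  have := sigmoid_lt_one x
  nlinarith

noncomputable def negll (p t : ℝ) : ℝ := -(loglik p t)

lemma hasDerivAt_negll (p t : ℝ) : HasDerivAt (negll p) (sigmoid t - p) t := by
  exact (hasDerivAt_loglik p t).neg.congr_deriv (by ring)

lemma strictConvexOn_negll (p : ℝ) : StrictConvexOn ℝ Set.univ (negll p) := by
  apply StrictMono.strictConvexOn_univ_of_deriv
  · have : Differentiable ℝ (negll p) := fun t => (hasDerivAt_negll p t).differentiableAt
    exact this.continuous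
  · have hd : deriv (negll p) = fun t => sigmoid t - p := by
      funext t; exact (hasDerivAt_negll p t).deriv
    rw [hd]
    exact fun a b hab => by simpa using sub_lt_sub_right (sigmoid_strictMono hab) p

lemma loglik_mono_prod (z z' : ℝ) : 0 ≤ (sigmoid z' - sigmoid z) * (z' - z) := by
  rcases le_total z z' with h | h
  · exact mul_nonneg (by simpa using sigmoid_strictMono.monotone h) (by linarith)
  · have := sigmoid_strictMono.monotone h
    have : sigmoid z' - sigmoid z ≤ 0 := by linarith
    nlinarith

lemma hasDerivAt_loglik_shift (p c x : ℝ) :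
    HasDerivAt (fun t => loglik p (c + t)) (p - sigmoid (c + x)) x := by
  have h := (hasDerivAt_loglik p (c + x)).comp x ((hasDerivAt_id x).const_add c)
  exact h.congr_deriv (mul_one _)

lemma hasDerivAt_loglik_shift' (p c x : ℝ) :
    HasDerivAt (fun t => loglik p (t + c)) (p - sigmoid (x + c)) x := by
  have h := (hasDerivAt_loglik p (x + c)).comp x ((hasDerivAt_id x).add_const c)
  exact h.congr_deriv (mul_one _)

lemma twoTowerLoss_eq {Q D K : Type*} [Fintype Q] [Fintype D] [Fintype K]
    (P : Q → ℝ) (π : Q → D → K → ℝ) (p : Q → D → K → ℝ)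
    (θ : K → ℝ) (γ : Q × D → ℝ) :
    twoTowerLoss P π p θ γ =
      -∑ q : Q, P q * ∑ d : D, ∑ k : K, π q d k * loglik (p q d k) (θ k + γ (q, d)) := rfl

lemma hasDerivAt_loss_gamma {Q D K : Type*} [Fintype Q] [Fintype D] [Fintype K]
    [DecidableEq Q] [DecidableEq D] [DecidableEq K]
    (P : Q → ℝ) (π : Q → D → K → ℝ) (p : Q → D → K → ℝ)
    (θ : K → ℝ) (γ : Q × D → ℝ) (q : Q) (d : D) :
    HasDerivAt (fun t : ℝ => twoTowerLoss P π p θ (Function.update γ (q, d) t))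
      (-(P q * ∑ k : K, π q d k * (p q d k - sigmoid (θ k + γ (q, d))))) (γ (q, d)) := by
  simp only [twoTowerLoss_eq]
  apply HasDerivAt.neg
  have h1 : ∀ q' d', HasDerivAt
      (fun t : ℝ => ∑ k : K, π q' d' k * loglik (p q' d' k) (θ k + Function.update γ (q, d) t (q', d')))
      (if (q', d') = (q, d) then ∑ k : K, π q d k * (p q d k - sigmoid (θ k + γ (q, d))) else 0)
      (γ (q, d)) := by
    intro q' d'
    by_cases h : (q', d') = (q, d)
    · obtain ⟨rfl, rfl⟩ := Prod.mk.inj h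
      rw [if_pos rfl]
      have hup : ∀ t : ℝ, Function.update γ (q', d') t (q', d') = t := fun t =>
        Function.update_self _ _ _
      have : ∀ k ∈ Finset.univ (α := K), HasDerivAt
          (fun t : ℝ => π q' d' k * loglik (p q' d' k) (θ k + t))
          (π q' d' k * (p q' d' k - sigmoid (θ k + γ (q', d')))) (γ (q', d')) :=
        fun k _ => (hasDerivAt_loglik_shift (p q' d' k) (θ k) (γ (q', d'))).const_mul _
      have := HasDerivAt.fun_sum this
      simp only [hup]
      exact this
    · rw [if_neg h]
      have : (fun t : ℝ => ∑ k : K, π q' d' k * loglik (p q' d' k) (θ k + Function.update γ (q, d) t (q', d')))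
          = fun _ => ∑ k : K, π q' d' k * loglik (p q' d' k) (θ k + γ (q', d')) := by
        funext t
        exact Finset.sum_congr rfl fun k _ => by rw [Function.update_of_ne h]
      rw [this]
      exact hasDerivAt_const _ _
  have h2 : ∀ q' ∈ Finset.univ (α := Q), HasDerivAt
      (fun t : ℝ => P q' * ∑ d' : D, ∑ k : K, π q' d' k * loglik (p q' d' k) (θ k + Function.update γ (q, d) t (q', d')))
      (P q' * ∑ d' : D, if (q', d') = (q, d) then ∑ k : K, π q d k * (p q d k - sigmoid (θ k + γ (q, d))) else 0)
      (γ (q, d)) :=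
    fun q' _ => (HasDerivAt.fun_sum (fun d' _ => h1 q' d')).const_mul _
  have h3 := HasDerivAt.fun_sum h2
  refine h3.congr_deriv ?_
  rw [show (∑ q' : Q, P q' * ∑ d' : D, if (q', d') = (q, d) then ∑ k : K, π q d k * (p q d k - sigmoid (θ k + γ (q, d))) else 0)
      = P q * ∑ k : K, π q d k * (p q d k - sigmoid (θ k + γ (q, d))) from ?_]
  simp [Prod.ext_iff, Finset.sum_ite_eq', Finset.mem_univ, ite_and]

lemma hasDerivAt_loss_theta {Q D K : Type*} [Fintype Q] [Fintype D] [Fintype K]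
    [DecidableEq Q] [DecidableEq D] [DecidableEq K]
    (P : Q → ℝ) (π : Q → D → K → ℝ) (p : Q → D → K → ℝ)
    (θ : K → ℝ) (γ : Q × D → ℝ) (k : K) :
    HasDerivAt (fun t : ℝ => twoTowerLoss P π p (Function.update θ k t) γ)
      (-(∑ q : Q, P q * ∑ d : D, π q d k * (p q d k - sigmoid (θ k + γ (q, d))))) (θ k) := by
  simp only [twoTowerLoss_eq]
  apply HasDerivAt.neg
  have h1 : ∀ (q' : Q) (d' : D) (k' : K), HasDerivAt
      (fun t : ℝ => π q' d' k' * loglik (p q' d' k') (Function.update θ k t k' + γ (q', d')))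
      (if k' = k then π q' d' k * (p q' d' k - sigmoid (θ k + γ (q', d'))) else 0)
      (θ k) := by
    intro q' d' k'
    by_cases h : k' = k
    · subst h
      rw [if_pos rfl]
      have hup : ∀ t : ℝ, Function.update θ k' t k' = t := fun t => Function.update_self _ _ _
      have := (hasDerivAt_loglik_shift' (p q' d' k') (γ (q', d')) (θ k')).const_mul (π q' d' k')
      simp only [hup]
      exact this
    · rw [if_neg h]
      have : (fun t : ℝ => π q' d' k' * loglik (p q' d' k') (Function.update θ k t k' + γ (q', d')))
          = fun _ => π q' d' k' * loglik (p q' d' k') (θ k' + γ (q', d')) := by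
        funext t; rw [Function.update_of_ne h]
      rw [this]
      exact hasDerivAt_const _ _
  have h2 : ∀ q' ∈ Finset.univ (α := Q), HasDerivAt
      (fun t : ℝ => P q' * ∑ d' : D, ∑ k' : K, π q' d' k' * loglik (p q' d' k') (Function.update θ k t k' + γ (q', d')))
      (P q' * ∑ d' : D, ∑ k' : K, if k' = k then π q' d' k * (p q' d' k - sigmoid (θ k + γ (q', d'))) else 0)
      (θ k) :=
    fun q' _ => (HasDerivAt.fun_sum (fun d' _ => HasDerivAt.fun_sum (fun k' _ => h1 q' d' k'))).const_mul _
  have h3 := HasDerivAt.fun_sum h2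
  refine h3.congr_deriv ?_
  refine Finset.sum_congr rfl fun q' _ => ?_
  congr 1
  refine Finset.sum_congr rfl fun d' _ => ?_
  simp [Finset.sum_ite_eq']

lemma StrictConvexOn.const_mul_pos {c : ℝ} {f : ℝ → ℝ} (hc : 0 < c)
    (hf : StrictConvexOn ℝ Set.univ f) :
    StrictConvexOn ℝ Set.univ (fun x => c * f x) := by
  refine ⟨hf.1, fun x hx y hy hxy a b ha hb hab => ?_⟩
  have h := hf.2 hx hy hxy ha hb hab
  simp only [smul_eq_mul] at h ⊢
  nlinarith [mul_lt_mul_of_pos_left h hc]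

lemma strictConvexOn_pi_sum {ι : Type*} [Fintype ι] (φ : ι → ℝ → ℝ)
    (hφ : ∀ i, StrictConvexOn ℝ Set.univ (φ i)) :
    StrictConvexOn ℝ Set.univ (fun z : ι → ℝ => ∑ i, φ i (z i)) := by
  refine ⟨convex_univ, ?_⟩
  intro x _ y _ hxy a b ha hb hab
  obtain ⟨i₀, hi₀⟩ : ∃ i, x i ≠ y i := by
    by_contra h; push_neg at h; exact hxy (funext h)
  have key : ∑ i, φ i ((a • x + b • y) i) < ∑ i, (a * φ i (x i) + b * φ i (y i)) := by
    apply Finset.sum_lt_sum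
    · intro i _
      have := (hφ i).convexOn.2 (Set.mem_univ (x i)) (Set.mem_univ (y i)) ha.le hb.le hab
      simpa [smul_eq_mul] using this
    · refine ⟨i₀, Finset.mem_univ _, ?_⟩
      have := (hφ i₀).2 (Set.mem_univ (x i₀)) (Set.mem_univ (y i₀)) hi₀ ha hb hab
      simpa [smul_eq_mul] using this
  calc (fun z : ι → ℝ => ∑ i, φ i (z i)) (a • x + b • y)
      = ∑ i, φ i ((a • x + b • y) i) := rfl
    _ < ∑ i, (a * φ i (x i) + b * φ i (y i)) := key
    _ = a • ∑ i, φ i (x i) + b • ∑ i, φ i (y i) := by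
        simp [Finset.sum_add_distrib, Finset.mul_sum, smul_eq_mul]

lemma sum_comm3 {A B C : Type*} [Fintype A] [Fintype B] [Fintype C] (f : A → B → C → ℝ) :
    ∑ a : A, ∑ b : B, ∑ c : C, f a b c = ∑ c : C, ∑ a : A, ∑ b : B, f a b c := by
  rw [show (∑ a : A, ∑ b : B, ∑ c : C, f a b c) = ∑ a : A, ∑ c : C, ∑ b : B, f a b c from
    Finset.sum_congr rfl fun a _ => Finset.sum_comm]
  exact Finset.sum_comm

lemma keyA {Q D K : Type*} [Fintype Q] [Fintype D] [Fintype K]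
    (w r : Q → D → K → ℝ) (cθ : K → ℝ) (cγ : Q × D → ℝ)
    (hθ : ∀ k, ∑ q : Q, ∑ d : D, w q d k * r q d k = 0)
    (hγ : ∀ q d, ∑ k : K, w q d k * r q d k = 0) :
    ∑ q : Q, ∑ d : D, ∑ k : K, w q d k * r q d k * (cθ k + cγ (q, d)) = 0 := by
  have hsplit : ∑ q : Q, ∑ d : D, ∑ k : K, w q d k * r q d k * (cθ k + cγ (q, d))
      = (∑ q : Q, ∑ d : D, ∑ k : K, w q d k * r q d k * cθ k)
        + (∑ q : Q, ∑ d : D, ∑ k : K, w q d k * r q d k * cγ (q, d)) := by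
    simp only [mul_add, Finset.sum_add_distrib]
  rw [hsplit]
  have h1 : ∑ q : Q, ∑ d : D, ∑ k : K, w q d k * r q d k * cθ k = 0 := by
    rw [sum_comm3]
    apply Finset.sum_eq_zero
    intro k _
    simp only [← Finset.sum_mul]
    rw [hθ k, zero_mul]
  have h2 : ∑ q : Q, ∑ d : D, ∑ k : K, w q d k * r q d k * cγ (q, d) = 0 := by
    apply Finset.sum_eq_zero
    intro q _
    apply Finset.sum_eq_zero
    intro d _
    simp only [← Finset.sum_mul]
    rw [hγ q d, zero_mul]
  rw [h1, h2, add_zero]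


/-- The population two-tower loss, viewed as a function of the vector of sums
`z = θ_k + γ_{q,d}` over observed triples with positive weight
`P(q)·π(d,k|q) > 0`, is strictly convex; consequently, any two stationary
points of the loss yield identical click probabilities `σ(θ_k + γ_{q,d})` on
all positively-weighted triples. -/
theorem stmt_17 {Q D K : Type*} [Fintype Q] [Fintype D] [Fintype K]
    [DecidableEq Q] [DecidableEq D] [DecidableEq K]
    (P : Q → ℝ) (π : Q → D → K → ℝ) (p : Q → D → K → ℝ)
    (hP : ∀ q, 0 ≤ P q) (hπ : ∀ q d k, 0 ≤ π q d k)
    (hp : ∀ q d k, p q d k ∈ Set.Ioo (0 : ℝ) 1) :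
    StrictConvexOn ℝ Set.univ
        (fun z : {x : Q × D × K // 0 < P x.1 * π x.1 x.2.1 x.2.2} → ℝ =>
          -∑ i, (P i.1.1 * π i.1.1 i.1.2.1 i.1.2.2) *
            (p i.1.1 i.1.2.1 i.1.2.2 * Real.log (sigmoid (z i)) +
              (1 - p i.1.1 i.1.2.1 i.1.2.2) * Real.log (1 - sigmoid (z i)))) ∧
    (∀ (θ θ' : K → ℝ) (γ γ' : Q × D → ℝ),
        (∀ q d, HasDerivAt
          (fun t : ℝ => twoTowerLoss P π p θ (Function.update γ (q, d) t))
          0 (γ (q, d))) →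
        (∀ k, HasDerivAt
          (fun t : ℝ => twoTowerLoss P π p (Function.update θ k t) γ)
          0 (θ k)) →
        (∀ q d, HasDerivAt
          (fun t : ℝ => twoTowerLoss P π p θ' (Function.update γ' (q, d) t))
          0 (γ' (q, d))) →
        (∀ k, HasDerivAt
          (fun t : ℝ => twoTowerLoss P π p (Function.update θ' k t) γ')
          0 (θ' k)) →
        ∀ q d k, 0 < P q * π q d k →
          sigmoid (θ k + γ (q, d)) = sigmoid (θ' k + γ' (q, d))) := by
  constructor
  · -- strict convexity
    have hfun : (fun z : {x : Q × D × K // 0 < P x.1 * π x.1 x.2.1 x.2.2} → ℝ =>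
          -∑ i, (P i.1.1 * π i.1.1 i.1.2.1 i.1.2.2) *
            (p i.1.1 i.1.2.1 i.1.2.2 * Real.log (sigmoid (z i)) +
              (1 - p i.1.1 i.1.2.1 i.1.2.2) * Real.log (1 - sigmoid (z i))))
        = fun z => ∑ i : {x : Q × D × K // 0 < P x.1 * π x.1 x.2.1 x.2.2},
            (P i.1.1 * π i.1.1 i.1.2.1 i.1.2.2) * negll (p i.1.1 i.1.2.1 i.1.2.2) (z i) := by
      funext z
      rw [← Finset.sum_neg_distrib]
      refine Finset.sum_congr rfl fun i _ => ?_
      simp only [negll, loglik]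
      ring
    rw [hfun]
    refine strictConvexOn_pi_sum
      (fun (i : {x : Q × D × K // 0 < P x.1 * π x.1 x.2.1 x.2.2}) (t : ℝ) =>
        (P i.1.1 * π i.1.1 i.1.2.1 i.1.2.2) * negll (p i.1.1 i.1.2.1 i.1.2.2) t)
      (fun i => ?_)
    have hw : 0 < P i.1.1 * π i.1.1 i.1.2.1 i.1.2.2 := i.2
    exact (strictConvexOn_negll (p i.1.1 i.1.2.1 i.1.2.2)).const_mul_pos hw
  · intro θ θ' γ γ' hγs hθs hγs' hθs' q d k hqdk
    -- stationarity equations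
    have Hγ : ∀ q d, P q * ∑ k : K, π q d k * (p q d k - sigmoid (θ k + γ (q, d))) = 0 :=
      fun q d => neg_eq_zero.mp ((hasDerivAt_loss_gamma P π p θ γ q d).unique (hγs q d))
    have Hθ : ∀ k, ∑ q : Q, P q * ∑ d : D, π q d k * (p q d k - sigmoid (θ k + γ (q, d))) = 0 :=
      fun k => neg_eq_zero.mp ((hasDerivAt_loss_theta P π p θ γ k).unique (hθs k))
    have Hγ' : ∀ q d, P q * ∑ k : K, π q d k * (p q d k - sigmoid (θ' k + γ' (q, d))) = 0 :=
      fun q d => neg_eq_zero.mp ((hasDerivAt_loss_gamma P π p θ' γ' q d).unique (hγs' q d))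
    have Hθ' : ∀ k, ∑ q : Q, P q * ∑ d : D, π q d k * (p q d k - sigmoid (θ' k + γ' (q, d))) = 0 :=
      fun k => neg_eq_zero.mp ((hasDerivAt_loss_theta P π p θ' γ' k).unique (hθs' k))
    set w : Q → D → K → ℝ := fun q d k => P q * π q d k with hw
    set r : Q → D → K → ℝ := fun q d k => p q d k - sigmoid (θ k + γ (q, d)) with hr
    set r' : Q → D → K → ℝ := fun q d k => p q d k - sigmoid (θ' k + γ' (q, d)) with hr'
    have hθw : ∀ k, ∑ q : Q, ∑ d : D, w q d k * r q d k = 0 := fun k => by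
      simpa [hw, hr, Finset.mul_sum, mul_assoc] using Hθ k
    have hγw : ∀ q d, ∑ k : K, w q d k * r q d k = 0 := fun q d => by
      have h0 := Hγ q d
      rw [Finset.mul_sum] at h0
      simpa [hw, hr, mul_assoc] using h0
    have hθw' : ∀ k, ∑ q : Q, ∑ d : D, w q d k * r' q d k = 0 := fun k => by
      simpa [hw, hr', Finset.mul_sum, mul_assoc] using Hθ' k
    have hγw' : ∀ q d, ∑ k : K, w q d k * r' q d k = 0 := fun q d => by
      have h0 := Hγ' q d
      rw [Finset.mul_sum] at h0
      simpa [hw, hr', mul_assoc] using h0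
    have hA := keyA w r (fun k => θ' k - θ k) (fun x => γ' x - γ x) hθw hγw
    have hB := keyA w r' (fun k => θ' k - θ k) (fun x => γ' x - γ x) hθw' hγw'
    -- the monotone pairing sum
    set F : Q → D → K → ℝ := fun q d k =>
      w q d k * ((sigmoid (θ' k + γ' (q, d)) - sigmoid (θ k + γ (q, d))) *
        ((θ' k + γ' (q, d)) - (θ k + γ (q, d)))) with hF
    have hE : ∑ q : Q, ∑ d : D, ∑ k : K, F q d k = 0 := by
      have step : ∀ q d k, F q d k =
          w q d k * r q d k * ((θ' k - θ k) + (γ' (q, d) - γ (q, d)))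
          - w q d k * r' q d k * ((θ' k - θ k) + (γ' (q, d) - γ (q, d))) := by
        intro q d k; simp only [hF, hr, hr']; ring
      calc ∑ q : Q, ∑ d : D, ∑ k : K, F q d k
          = ∑ q : Q, ∑ d : D, ∑ k : K,
            (w q d k * r q d k * ((θ' k - θ k) + (γ' (q, d) - γ (q, d)))
              - w q d k * r' q d k * ((θ' k - θ k) + (γ' (q, d) - γ (q, d)))) :=
            Finset.sum_congr rfl fun q _ => Finset.sum_congr rfl fun d _ =>
              Finset.sum_congr rfl fun k _ => step q d k
        _ = 0 := by
            simp only [Finset.sum_sub_distrib]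
            rw [hA, hB, sub_zero]
    have hFnonneg : ∀ q d k, 0 ≤ F q d k := fun q d k =>
      mul_nonneg (mul_nonneg (hP q) (hπ q d k)) (loglik_mono_prod _ _)
    -- each term is zero
    have hqd0 : F q d k = 0 := by
      have h1 : F q d k ≤ ∑ k : K, F q d k :=
        Finset.single_le_sum (fun k _ => hFnonneg q d k) (Finset.mem_univ k)
      have h2 : ∑ k : K, F q d k ≤ ∑ d : D, ∑ k : K, F q d k :=
        Finset.single_le_sum (fun d _ => Finset.sum_nonneg fun k _ => hFnonneg q d k)
          (Finset.mem_univ d)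
      have h3 : ∑ d : D, ∑ k : K, F q d k ≤ ∑ q : Q, ∑ d : D, ∑ k : K, F q d k :=
        Finset.single_le_sum
          (fun q _ => Finset.sum_nonneg fun d _ => Finset.sum_nonneg fun k _ => hFnonneg q d k)
          (Finset.mem_univ q)
      exact le_antisymm (by rw [← hE] at *; linarith) (hFnonneg q d k)
    have hprod : (sigmoid (θ' k + γ' (q, d)) - sigmoid (θ k + γ (q, d))) *
        ((θ' k + γ' (q, d)) - (θ k + γ (q, d))) = 0 := by
      have := hqd0
      simp only [hF, hw] at this
      rcases mul_eq_zero.mp this with h | h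
      · exact absurd h hqdk.ne'
      · exact h
    rcases lt_trichotomy (θ k + γ (q, d)) (θ' k + γ' (q, d)) with h | h | h
    · have hs := sigmoid_strictMono h
      nlinarith
    · rw [h]
    · have hs := sigmoid_strictMono h
      nlinarith
end

section
/- If the supports supp P(x|k) for positions k = 1,…,K are pairwise disjoint compact sets and the relevance tower class is all continuous functions ℝ^m → ℝ, then the feature-based additive two-tower model is unidentifiable: for any rank offsets Δ_1,…,Δ_K ∈ ℝ there exists a continuous function g : ℝ^m → ℝ with g(x) = Δ_k for all x ∈ supp P(x|k), so that r' = r − g together with θ'_k = θ_k + Δ_k reproduces all click probabilities exactly. -/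
open Set Function

section PairwiseDisjointClosed

variable {X ι : Type*} [TopologicalSpace X] [NormalSpace X] {s : ι → Set X}

lemma exists_continuous_one_on_zero_on_others_of_pairwise_disjoint [Finite ι]
    (hs : ∀ i, IsClosed (s i)) (hdisj : Pairwise (Disjoint on s)) (i : ι) :
    ∃ f : C(X, ℝ), EqOn f 1 (s i) ∧ ∀ j ≠ i, EqOn f 0 (s j) := by
  have hclosed : IsClosed (⋃ j ∈ ({i}ᶜ : Set ι), s j) :=
    (toFinite _).isClosed_biUnion fun j _ => hs j
  have hdisj' : Disjoint (⋃ j ∈ ({i}ᶜ : Set ι), s j) (s i) :=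
    disjoint_iUnion₂_left.2 fun j hj => hdisj hj
  obtain ⟨f, hf0, hf1, -⟩ := exists_continuous_zero_one_of_isClosed hclosed (hs i) hdisj'
  exact ⟨f, hf1, fun j hj x hx => hf0 (mem_biUnion hj hx)⟩

theorem exists_continuous_eq_const_on_of_pairwise_disjoint [Fintype ι]
    (hs : ∀ i, IsClosed (s i)) (hdisj : Pairwise (Disjoint on s)) (c : ι → ℝ) :
    ∃ g : C(X, ℝ), ∀ i, ∀ x ∈ s i, g x = c i := by
  choose f hf_one hf_zero using
    exists_continuous_one_on_zero_on_others_of_pairwise_disjoint hs hdisj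
  refine ⟨∑ j, c j • f j, fun i x hx => ?_⟩
  rw [ContinuousMap.sum_apply, Finset.sum_eq_single i (fun j _ hji => ?_) (by simp)]
  · simp [hf_one i hx]
  · simp [hf_zero j i hji.symm hx]

end PairwiseDisjointClosed

theorem stmt_18_general {m : ℕ} {K : Type*} [Fintype K]
    (supp : K → Set (EuclideanSpace ℝ (Fin m)))
    (hcpt : ∀ k, IsCompact (supp k))
    (hdisj : ∀ k k', k ≠ k' → Disjoint (supp k) (supp k'))
    (θ : K → ℝ) (r : EuclideanSpace ℝ (Fin m) → ℝ) :
    ∀ Δ : K → ℝ, ∃ g : EuclideanSpace ℝ (Fin m) → ℝ,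
      Continuous g ∧
      (∀ k, ∀ x ∈ supp k, g x = Δ k) ∧
      (∀ k, ∀ x ∈ supp k,
        sigmoid ((θ k + Δ k) + (r x - g x)) = sigmoid (θ k + r x)) := by
  intro Δ
  obtain ⟨g, hg⟩ := exists_continuous_eq_const_on_of_pairwise_disjoint
    (fun k => (hcpt k).isClosed) (fun k k' => hdisj k k') Δ
  refine ⟨g, g.continuous, hg, fun k x hx => ?_⟩
  rw [hg k x hx, add_add_sub_cancel]

/-- With pairwise disjoint compact position supports and an unrestricted class
of continuous relevance towers, the feature-based additive two-tower model is
unidentifiable: for any rank offsets `Δ_k` there is a continuous `g` equal to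
`Δ_k` on each support, and `(θ + Δ, r − g)` reproduces all click
probabilities. -/
theorem stmt_18 {m : ℕ} {K : Type*} [Fintype K]
    (supp : K → Set (EuclideanSpace ℝ (Fin m)))
    (hcpt : ∀ k, IsCompact (supp k))
    (hne : ∀ k, (supp k).Nonempty)
    (hdisj : ∀ k k', k ≠ k' → Disjoint (supp k) (supp k'))
    (θ : K → ℝ) (r : EuclideanSpace ℝ (Fin m) → ℝ) (hr : Continuous r) :
    ∀ Δ : K → ℝ, ∃ g : EuclideanSpace ℝ (Fin m) → ℝ,
      Continuous g ∧
      (∀ k, ∀ x ∈ supp k, g x = Δ k) ∧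
      (∀ k, ∀ x ∈ supp k,
        sigmoid ((θ k + Δ k) + (r x - g x)) = sigmoid (θ k + r x)) :=
  stmt_18_general supp hcpt hdisj θ r
end
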